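/- arXiv:2407.04540 — 5 statements merged into one kernel-verified Lean document; each statement's English description precedes it below -/
import Mathlib

section
/- For every natural number t, all coefficients of the degree-t Chebyshev polynomial of the first kind Φ_t are at most (1+√2)^t in absolute value. -/
/-- Φ_t, the degree-t Chebyshev polynomial of the first kind over ℝ:
Φ_0(x)=1, Φ_1(x)=x, Φ_{t+1}(x)=2x·Φ_t(x)−Φ_{t−1}(x). -/
noncomputable def Phi (t : ℕ) : Polynomial ℝ := Polynomial.Chebyshev.T ℝ t

/-!
Writing `‖p‖` for the largest absolute value of a coefficient of `p`, the recurrence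
`T (n + 2) = 2 X T (n + 1) - T n` gives `‖T (n + 2)‖ ≤ 2 ‖T (n + 1)‖ + ‖T n‖`, since multiplying
by `X` only shifts coefficients. The bound `(1 + √2) ^ n` satisfies this recurrence with
equality, because `1 + √2` is a root of `x ^ 2 = 2 x + 1`, and dominates `‖T 0‖ = ‖T 1‖ = 1`.
-/

open Polynomial

lemma one_add_sqrt_two_pow_add_two (n : ℕ) :
    (1 + √2) ^ (n + 2) = 2 * (1 + √2) ^ (n + 1) + (1 + √2) ^ n := by
  have hsq : √2 ^ 2 = 2 := Real.sq_sqrt zero_le_two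
  linear_combination (1 + √2) ^ n * hsq

lemma abs_coeff_one_le (j : ℕ) : |(1 : ℝ[X]).coeff j| ≤ 1 := by
  rw [coeff_one]
  split_ifs <;> norm_num

lemma abs_coeff_X_mul_le {p : ℝ[X]} {c : ℝ} (hc : 0 ≤ c) (hp : ∀ j, |p.coeff j| ≤ c) :
    ∀ j, |(X * p).coeff j| ≤ c
  | 0 => by simpa using hc
  | j + 1 => by simpa only [coeff_X_mul] using hp j

lemma abs_coeff_two_mul_X_mul_sub_le {p q : ℝ[X]} {a b : ℝ} (ha : 0 ≤ a)
    (hp : ∀ j, |p.coeff j| ≤ a) (hq : ∀ j, |q.coeff j| ≤ b) (j : ℕ) :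
    |(2 * X * p - q).coeff j| ≤ 2 * a + b := by
  have hcoeff : (2 * X * p - q).coeff j = 2 * (X * p).coeff j - q.coeff j := by
    rw [coeff_sub, mul_assoc, coeff_ofNat_mul]
  calc |(2 * X * p - q).coeff j|
      ≤ 2 * |(X * p).coeff j| + |q.coeff j| := by
        rw [hcoeff]
        refine (abs_sub _ _).trans_eq ?_
        rw [abs_mul, abs_two]
    _ ≤ 2 * a + b := by gcongr <;> [exact abs_coeff_X_mul_le ha hp j; exact hq j]

theorem abs_coeff_chebyshev_T_le (n : ℕ) (j : ℕ) :
    |(Chebyshev.T ℝ n).coeff j| ≤ (1 + √2) ^ n := by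
  induction n using Nat.twoStepInduction generalizing j with
  | zero => simpa using abs_coeff_one_le j
  | one =>
    have hX := abs_coeff_X_mul_le zero_le_one abs_coeff_one_le j
    simpa using hX.trans (le_add_of_nonneg_right (Real.sqrt_nonneg 2))
  | more n ih ih' =>
    rw [one_add_sqrt_two_pow_add_two]
    push_cast
    rw [Chebyshev.T_add_two]
    exact abs_coeff_two_mul_X_mul_sub_le (by positivity) (by exact_mod_cast ih') ih j

/-- All coefficients of the degree-t Chebyshev polynomial of the first kind are
at most (1+√2)^t in absolute value. -/
theorem chebyshev_coeff_bound (t : ℕ) (j : ℕ) :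
    |(Phi t).coeff j| ≤ (1 + Real.sqrt 2) ^ t :=
  abs_coeff_chebyshev_T_le t j
end

section
/- Let ℓ ≥ 2 be an even natural number. Then for all real x, E_ℓ(x) ≥ min(1/100, e^{−ℓ}). -/
/-- The exponential truncation polynomial E_ℓ(x) := ∑_{j=0}^{ℓ} (−1)^j x^j / j!
(with the convention x^0 = 1 for all x). -/
noncomputable def E (ℓ : ℕ) (x : ℝ) : ℝ :=
  ∑ j ∈ Finset.range (ℓ + 1), (-1) ^ j * x ^ j / (Nat.factorial j)

/-- Truncated exponential series. -/
noncomputable def Ttr (n : ℕ) (y : ℝ) : ℝ :=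
  ∑ j ∈ Finset.range (n + 1), y ^ j / (Nat.factorial j)

lemma E_eq_Ttr (ℓ : ℕ) (x : ℝ) : E ℓ x = Ttr ℓ (-x) := by
  unfold E Ttr
  refine Finset.sum_congr rfl fun j _ => ?_
  rw [neg_pow x j]

lemma Ttr_succ (n : ℕ) (y : ℝ) :
    Ttr (n + 1) y = Ttr n y + y ^ (n + 1) / (Nat.factorial (n + 1)) := by
  unfold Ttr
  rw [Finset.sum_range_succ]

lemma Ttr_zero (y : ℝ) : Ttr 0 y = 1 := by simp [Ttr]

lemma Ttr_at_zero (n : ℕ) : Ttr n 0 = 1 := by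
  induction n with
  | zero => exact Ttr_zero 0
  | succ n ih => rw [Ttr_succ, ih]; simp

lemma hasDerivAt_Ttr (n : ℕ) (y : ℝ) : HasDerivAt (Ttr (n + 1)) (Ttr n y) y := by
  induction n generalizing y with
  | zero =>
      have h : HasDerivAt (fun y : ℝ => 1 + y) 1 y := by
        simpa using (hasDerivAt_id y).const_add 1
      have he : (fun y : ℝ => 1 + y) = Ttr 1 := by
        funext z; simp [Ttr, Finset.sum_range_succ]
      rw [he] at h
      simpa [Ttr_zero] using h
  | succ n ih =>
      have h1 : HasDerivAt (fun z : ℝ => z ^ (n + 2) / (Nat.factorial (n + 2)))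
          (y ^ (n + 1) / (Nat.factorial (n + 1))) y := by
        have := (hasDerivAt_pow (n + 2) y).div_const (Nat.factorial (n + 2) : ℝ)
        refine this.congr_deriv ?_
        rw [show n + 2 - 1 = n + 1 from rfl]; push_cast
        have hfac : ((Nat.factorial (n + 2)) : ℝ) = (n + 2) * (Nat.factorial (n + 1)) := by
          rw [Nat.factorial_succ]; push_cast; ring
        rw [hfac]
        have hpos : ((Nat.factorial (n + 1)) : ℝ) ≠ 0 := by positivity
        field_simp
      have h := (ih y).add h1
      have he : (Ttr (n + 1) + fun z : ℝ => z ^ (n + 2) / (Nat.factorial (n + 2)))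
          = Ttr (n + 2) := by
        funext z; exact (Ttr_succ (n + 1) z).symm
      rw [he] at h
      rw [Ttr_succ]
      exact h

lemma Ttr_sign : ∀ n : ℕ, ∀ y : ℝ, y ≤ 0 →
    (Even n → Real.exp y ≤ Ttr n y) ∧ (Odd n → Ttr n y ≤ Real.exp y) := by
  intro n
  induction n with
  | zero =>
      intro y hy
      refine ⟨fun _ => ?_, fun h => absurd h (by simp)⟩
      rw [Ttr_zero]
      exact Real.exp_le_one_iff.mpr hy
  | succ n ih =>
      intro y hy
      set g : ℝ → ℝ := fun z => Ttr (n + 1) z - Real.exp z with hg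
      have hgd : ∀ z : ℝ, HasDerivAt g (Ttr n z - Real.exp z) z := fun z =>
        (hasDerivAt_Ttr n z).sub (Real.hasDerivAt_exp z)
      have hcont : ContinuousOn g (Set.Iic 0) :=
        fun z _ => ((hgd z).continuousAt).continuousWithinAt
      have hg0 : g 0 = 0 := by simp [hg, Ttr_at_zero]
      constructor
      · intro he
        -- n+1 even, so n is odd, derivative ≤ 0 on Iic 0, g antitone, g y ≥ g 0 = 0
        have hn : Odd n := by
          rcases he with ⟨k, hk⟩; exact ⟨k - 1, by omega⟩
        have hanti : AntitoneOn g (Set.Iic 0) := by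
          refine antitoneOn_of_deriv_nonpos (convex_Iic 0) hcont ?_ ?_
          · intro z hz
            exact ((hgd z).differentiableAt).differentiableWithinAt
          · intro z hz
            rw [interior_Iic] at hz
            rw [(hgd z).deriv]
            have := (ih z (le_of_lt hz)).2 hn
            linarith
        have := hanti hy (Set.self_mem_Iic) hy
        rw [hg0] at this
        have : Real.exp y ≤ Ttr (n + 1) y := by
          simp only [hg] at this; linarith
        exact this
      · intro ho
        have hn : Even n := by
          rcases ho with ⟨k, hk⟩
          exact ⟨k, by omega⟩
        have hmono : MonotoneOn g (Set.Iic 0) := by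
          refine monotoneOn_of_deriv_nonneg (convex_Iic 0) hcont ?_ ?_
          · intro z hz
            exact ((hgd z).differentiableAt).differentiableWithinAt
          · intro z hz
            rw [interior_Iic] at hz
            rw [(hgd z).deriv]
            have := (ih z (le_of_lt hz)).1 hn
            linarith
        have := hmono hy (Set.self_mem_Iic) hy
        rw [hg0] at this
        simp only [hg] at this
        linarith

/-- For y ≤ -2m, the even truncation T_{2m}(y) is at least 1. -/
lemma one_le_Ttr : ∀ m : ℕ, ∀ y : ℝ, y ≤ -(2 * m : ℝ) → 1 ≤ Ttr (2 * m) y := by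
  intro m
  induction m with
  | zero => intro y _; rw [show 2 * 0 = 0 from rfl, Ttr_zero]
  | succ m ih =>
      intro y hy
      have hy' : y ≤ -(2 * m : ℝ) := by push_cast at hy ⊢; linarith
      have h1 := ih y hy'
      have h2m2 : (2 * m + 2 : ℕ) = 2 * (m + 1) := by ring
      have hstep : Ttr (2 * (m + 1)) y
          = Ttr (2 * m) y + y ^ (2 * m + 1) / (Nat.factorial (2 * m + 1))
            + y ^ (2 * m + 2) / (Nat.factorial (2 * m + 2)) := by
        rw [show 2 * (m + 1) = (2 * m + 1) + 1 by ring, Ttr_succ, Ttr_succ]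
      rw [hstep]
      have hyneg : y ≤ 0 := by
        have : (0 : ℝ) ≤ 2 * (m + 1 : ℕ) := by positivity
        push_cast at hy ⊢; linarith
      have hodd : y ^ (2 * m + 1) ≤ 0 := Odd.pow_nonpos ⟨m, by ring⟩ hyneg
      have hfac2 : ((Nat.factorial (2 * m + 2)) : ℝ)
          = (2 * m + 2) * (Nat.factorial (2 * m + 1)) := by
        rw [Nat.factorial_succ]; push_cast; ring
      have hpow2 : y ^ (2 * m + 2) = y ^ (2 * m + 1) * y := by ring
      have hfpos : (0 : ℝ) < (Nat.factorial (2 * m + 1)) := by positivity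
      have hkey : 0 ≤ y ^ (2 * m + 1) / (Nat.factorial (2 * m + 1))
          + y ^ (2 * m + 2) / (Nat.factorial (2 * m + 2)) := by
        rw [hpow2, hfac2]
        have hylb : y + (2 * m + 2) ≤ 0 := by push_cast at hy; linarith
        rw [div_add_div _ _ (ne_of_gt hfpos) (by positivity)]
        apply div_nonneg
        · nlinarith [mul_nonneg (mul_nonneg hfpos.le (neg_nonneg.2 hodd)) (neg_nonneg.2 hylb)]
        · positivity
      linarith

/-- For any even ℓ ≥ 2 and all real x, E_ℓ(x) ≥ min(1/100, e^{−ℓ}). -/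
theorem E_lower_bound (ℓ : ℕ) (hℓ2 : 2 ≤ ℓ) (hℓe : Even ℓ) (x : ℝ) :
    min (1 / 100) (Real.exp (-(ℓ : ℝ))) ≤ E ℓ x := by
  obtain ⟨m, hm⟩ := hℓe
  have hℓ2m : ℓ = 2 * m := by omega
  rw [E_eq_Ttr]
  rcases le_or_gt x 0 with hx | hx
  · -- x ≤ 0 : all terms nonneg, first term is 1
    have h1 : (1 : ℝ) ≤ Ttr ℓ (-x) := by
      unfold Ttr
      have := Finset.single_le_sum (f := fun j => (-x) ^ j / (Nat.factorial j))
        (fun j _ => div_nonneg (pow_nonneg (by linarith) j) (by positivity)) (Finset.mem_range.mpr (Nat.succ_pos ℓ))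
      simpa using this
    calc min (1/100) (Real.exp (-(ℓ:ℝ))) ≤ 1/100 := min_le_left _ _
      _ ≤ 1 := by norm_num
      _ ≤ Ttr ℓ (-x) := h1
  · rcases le_or_gt x (ℓ : ℝ) with hxl | hxl
    · -- 0 < x ≤ ℓ : use exp comparison
      have hsign := (Ttr_sign ℓ (-x) (by linarith)).1 ⟨m, hm⟩
      calc min (1/100) (Real.exp (-(ℓ:ℝ))) ≤ Real.exp (-(ℓ:ℝ)) := min_le_right _ _
        _ ≤ Real.exp (-x) := Real.exp_le_exp.mpr (by linarith)
        _ ≤ Ttr ℓ (-x) := hsign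
    · -- x > ℓ : pairing argument
      have h1 : (1 : ℝ) ≤ Ttr ℓ (-x) := by
        rw [hℓ2m]
        apply one_le_Ttr m
        rw [hℓ2m] at hxl
        push_cast at hxl ⊢
        linarith
      calc min (1/100) (Real.exp (-(ℓ:ℝ))) ≤ 1/100 := min_le_left _ _
        _ ≤ 1 := by norm_num
        _ ≤ Ttr ℓ (-x) := h1
end

section
/- For every natural number t ≥ 0 and all real numbers 1 ≤ x ≤ y: Φ_t(x) > 0, Φ_{t+1}(x)/Φ_t(x) ≥ 1, and Φ_{t+1}(x)/Φ_t(x) ≤ Φ_{t+1}(y)/Φ_t(y); i.e., on [1,∞) the ratio Φ_{t+1}/Φ_t is at least 1 and monotonically nondecreasing. -/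
lemma Phi_eval_zero (x : ℝ) : (Phi 0).eval x = 1 := by
  simp [Phi]

lemma Phi_eval_one (x : ℝ) : (Phi 1).eval x = x := by
  simp [Phi]

lemma Phi_eval_add_two (t : ℕ) (x : ℝ) :
    (Phi (t + 2)).eval x = 2 * x * (Phi (t + 1)).eval x - (Phi t).eval x := by
  simp only [Phi]
  push_cast
  rw [Polynomial.Chebyshev.T_add_two]
  simp [mul_assoc]

lemma one_le_Phi_eval_and_le_succ {x : ℝ} (hx : 1 ≤ x) (t : ℕ) :
    1 ≤ (Phi t).eval x ∧ (Phi t).eval x ≤ (Phi (t + 1)).eval x := by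
  induction t with
  | zero => simpa [Phi_eval_zero, Phi_eval_one] using hx
  | succ t ih =>
    obtain ⟨hone, hle⟩ := ih
    refine ⟨hone.trans hle, ?_⟩
    rw [Phi_eval_add_two]
    nlinarith

lemma Phi_eval_pos {x : ℝ} (hx : 1 ≤ x) (t : ℕ) : 0 < (Phi t).eval x :=
  zero_lt_one.trans_le (one_le_Phi_eval_and_le_succ hx t).1

lemma Phi_eval_succ_div_succ {x : ℝ} (t : ℕ) (h : (Phi (t + 1)).eval x ≠ 0) :
    (Phi (t + 2)).eval x / (Phi (t + 1)).eval x
      = 2 * x - (Phi t).eval x / (Phi (t + 1)).eval x := by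
  rw [Phi_eval_add_two, sub_div, mul_div_cancel_right₀ _ h]

lemma Phi_eval_ratio_mono {x y : ℝ} (hx : 1 ≤ x) (hxy : x ≤ y) (t : ℕ) :
    (Phi (t + 1)).eval x / (Phi t).eval x ≤ (Phi (t + 1)).eval y / (Phi t).eval y := by
  induction t with
  | zero => simpa [Phi_eval_zero, Phi_eval_one] using hxy
  | succ t ih =>
    have hx₁pos := Phi_eval_pos hx (t + 1)
    have hy₁pos := Phi_eval_pos (hx.trans hxy) (t + 1)
    have hinv : (Phi t).eval y / (Phi (t + 1)).eval y ≤ (Phi t).eval x / (Phi (t + 1)).eval x := by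
      simpa only [inv_div] using inv_anti₀ (div_pos hx₁pos (Phi_eval_pos hx t)) ih
    rw [Phi_eval_succ_div_succ t hx₁pos.ne', Phi_eval_succ_div_succ t hy₁pos.ne']
    linarith

/-- On [1,∞), Φ_t is positive and the ratio Φ_{t+1}/Φ_t is at least 1 and
monotonically nondecreasing. -/
theorem chebyshev_ratio_monotone (t : ℕ) (x y : ℝ) (hx : 1 ≤ x) (hxy : x ≤ y) :
    0 < (Phi t).eval x ∧
    1 ≤ (Phi (t + 1)).eval x / (Phi t).eval x ∧
    (Phi (t + 1)).eval x / (Phi t).eval x ≤ (Phi (t + 1)).eval y / (Phi t).eval y := by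
  have hpos := Phi_eval_pos hx t
  have hle := (one_le_Phi_eval_and_le_succ hx t).2
  exact ⟨hpos, (one_le_div hpos).mpr hle, Phi_eval_ratio_mono hx hxy t⟩
end

section
/- For every real x ≥ 1 and every natural number t ≥ 0, Φ_t(x) > 0 and the logarithmic derivatives satisfy 0 = Φ_0'(x)/Φ_0(x) ≤ Φ_t'(x)/Φ_t(x) ≤ Φ_{t+1}'(x)/Φ_{t+1}(x); i.e., the sequence (Φ_t'(x)/Φ_t(x))_{t≥0} is nonnegative and nondecreasing in t. -/
open Polynomial Polynomial.Chebyshev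

section Identities

variable (R : Type*) [CommRing R]

theorem derivative_T_add_two (n : ℤ) :
    derivative (T R (n + 2)) =
      2 * T R (n + 1) + 2 * X * derivative (T R (n + 1)) - derivative (T R n) := by
  rw [T_add_two, derivative_sub, derivative_mul, derivative_mul]
  simp only [derivative_X, derivative_ofNat]
  ring

theorem wronskian_T_succ (n : ℤ) :
    wronskian (T R (n + 1)) (T R (n + 2)) =
      wronskian (T R n) (T R (n + 1)) + 2 * T R (n + 1) ^ 2 := by
  rw [wronskian, wronskian, derivative_T_add_two, T_add_two]
  ring

end Identities

section Ordered

variable {R : Type*} [CommRing R] [LinearOrder R] [IsStrictOrderedRing R]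

theorem nonneg_and_monotone_of_chebyshev_recurrence {u c : ℕ → R} {x : R} (hx : 1 ≤ x)
    (h0 : 0 ≤ u 0) (h01 : u 0 ≤ u 1) (hc : ∀ t, 0 ≤ c t)
    (hu : ∀ t, u (t + 2) = 2 * x * u (t + 1) - u t + c t) :
    (∀ t, 0 ≤ u t) ∧ Monotone u := by
  have step : ∀ t, 0 ≤ u t ∧ u t ≤ u (t + 1) := by
    intro t
    induction t with
    | zero => exact ⟨h0, h01⟩
    | succ t ih =>
      have hpos : 0 ≤ u (t + 1) := ih.1.trans ih.2
      refine ⟨hpos, ?_⟩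
      -- `u (t+2) - u (t+1) = (u (t+1) - u t) + 2 (x - 1) u (t+1) + c t`
      rw [hu t]
      nlinarith [hc t, mul_le_mul_of_nonneg_right hx hpos]
  exact ⟨fun t => (step t).1, monotone_nat_of_le_succ fun t => (step t).2⟩

theorem one_le_eval_wronskian_T (x : R) (n : ℕ) :
    1 ≤ (wronskian (T R n) (T R (n + 1))).eval x := by
  induction n with
  | zero => simp [wronskian]
  | succ n ih =>
    push_cast
    rw [add_assoc, one_add_one_eq_two, wronskian_T_succ, eval_add]
    exact le_add_of_le_of_nonneg ih (by simp only [eval_mul, eval_pow, eval_ofNat]; positivity)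

end Ordered

theorem eval_Phi_add_two (x : ℝ) (t : ℕ) :
    (Phi (t + 2)).eval x = 2 * x * (Phi (t + 1)).eval x - (Phi t).eval x := by
  simp [Phi, T_add_two]

theorem eval_derivative_Phi_add_two (x : ℝ) (t : ℕ) :
    (derivative (Phi (t + 2))).eval x =
      2 * x * (derivative (Phi (t + 1))).eval x - (derivative (Phi t)).eval x +
        2 * (Phi (t + 1)).eval x := by
  simp only [Phi, Nat.cast_add, Nat.cast_ofNat, Nat.cast_one, derivative_T_add_two, eval_sub,
    eval_add, eval_mul, eval_ofNat, eval_X]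
  ring

theorem monotone_eval_Phi {x : ℝ} (hx : 1 ≤ x) : Monotone fun t => (Phi t).eval x :=
  (nonneg_and_monotone_of_chebyshev_recurrence (c := 0) hx (by simp [Phi])
    (by simpa [Phi] using hx) (fun _ => le_rfl) (by simpa using eval_Phi_add_two x)).2

theorem one_le_eval_Phi {x : ℝ} (hx : 1 ≤ x) (t : ℕ) : 1 ≤ (Phi t).eval x := by
  simpa [Phi] using monotone_eval_Phi hx (Nat.zero_le t)

theorem eval_derivative_Phi_nonneg {x : ℝ} (hx : 1 ≤ x) (t : ℕ) :
    0 ≤ (derivative (Phi t)).eval x :=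
  (nonneg_and_monotone_of_chebyshev_recurrence (u := fun s => (derivative (Phi s)).eval x) hx
    (by simp [Phi]) (by simp [Phi])
    (fun s => by linarith [one_le_eval_Phi hx (s + 1)]) (eval_derivative_Phi_add_two x)).1 t

/-- For x ≥ 1 and every t ≥ 0, Φ_t(x) > 0 and the logarithmic derivatives
Φ_t'(x)/Φ_t(x) form a nonnegative, nondecreasing sequence in t, starting from
Φ_0'(x)/Φ_0(x) = 0. -/
theorem chebyshev_log_deriv_monotone (x : ℝ) (hx : 1 ≤ x) (t : ℕ) :
    0 < (Phi t).eval x ∧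
    (Polynomial.derivative (Phi 0)).eval x / (Phi 0).eval x = 0 ∧
    0 ≤ (Polynomial.derivative (Phi t)).eval x / (Phi t).eval x ∧
    (Polynomial.derivative (Phi t)).eval x / (Phi t).eval x ≤
      (Polynomial.derivative (Phi (t + 1))).eval x / (Phi (t + 1)).eval x := by
  have hpos (s : ℕ) : 0 < (Phi s).eval x := zero_lt_one.trans_le (one_le_eval_Phi hx s)
  refine ⟨hpos t, by simp [Phi], div_nonneg (eval_derivative_Phi_nonneg hx t) (hpos t).le, ?_⟩
  rw [div_le_div_iff₀ (hpos t) (hpos (t + 1))]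
  have hW := one_le_eval_wronskian_T x t
  simp only [wronskian, eval_sub, eval_mul] at hW
  push_cast [Phi]
  linarith
end

section
/- Let A, B, C, D be real polynomials in two variables x, y, and suppose that each of A+B, A−B, C+D, C−D is a (k,d,C₀)-bounded sum-of-squares polynomial (where k is a positive integer, d ≥ 1, and C₀ > 0). Then both A·C + B·D and A·C − B·D are (2k², 2d, 2^{3d}·C₀²)-bounded sum-of-squares polynomials. -/
/-- A real polynomial in two variables is (d,C)-bounded if it has total degree
at most d and each monomial of total degree d' has coefficient of magnitude at
most C/(d'!). -/
def IsBoundedPoly (d : ℕ) (C : ℝ) (q : MvPolynomial (Fin 2) ℝ) : Prop :=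
  q.totalDegree ≤ d ∧
    ∀ m : Fin 2 →₀ ℕ, |q.coeff m| ≤ C / (Nat.factorial (m 0 + m 1))

/-- A polynomial in two variables is a (k,d,C)-bounded sum-of-squares polynomial
if it is a sum of k squares of (d,C)-bounded polynomials. -/
def IsBoundedSoS (k d : ℕ) (C : ℝ) (p : MvPolynomial (Fin 2) ℝ) : Prop :=
  ∃ q : Fin k → MvPolynomial (Fin 2) ℝ,
    p = ∑ i, (q i) ^ 2 ∧ ∀ i, IsBoundedPoly d C (q i)

open MvPolynomial Finset

lemma support_sum_fin2 (u : Fin 2 →₀ ℕ) : ∑ i ∈ u.support, u i = u 0 + u 1 := by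
  rw [show u 0 + u 1 = ∑ i : Fin 2, u i from (Fin.sum_univ_two u).symm]
  exact Finset.sum_subset (Finset.subset_univ _)
    (fun i _ hi => Finsupp.notMem_support_iff.mp hi)

lemma neg_bounded {d : ℕ} {C : ℝ} {p : MvPolynomial (Fin 2) ℝ}
    (h : IsBoundedPoly d C p) : IsBoundedPoly d C (-p) := by
  refine ⟨by rw [totalDegree_neg]; exact h.1, fun m => ?_⟩
  rw [coeff_neg, abs_neg]; exact h.2 m

lemma sum_shift_le (n a c : ℕ) (h : a + c ≤ n + 1) :
    ∑ b ∈ Finset.range c, n.choose (a + b) ≤ 2 ^ n := by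
  have h1 : ∑ b ∈ Finset.range c, n.choose (a + b)
      = ∑ s ∈ Finset.Ico a (a + c), n.choose s := by
    rw [Finset.sum_Ico_eq_sum_range]; simp
  rw [h1]
  calc ∑ s ∈ Finset.Ico a (a + c), n.choose s
      ≤ ∑ s ∈ Finset.range (n + 1), n.choose s := by
        apply Finset.sum_le_sum_of_subset
        intro s hs
        simp only [Finset.mem_Ico, Finset.mem_range] at *
        omega
    _ = 2 ^ n := Nat.sum_range_choose n

lemma nested_choose_le (m0 m1 : ℕ) :
    ∑ a ∈ Finset.range (m0 + 1), ∑ b ∈ Finset.range (m1 + 1), (m0 + m1).choose (a + b)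
      ≤ (min m0 m1 + 1) * 2 ^ (m0 + m1) := by
  rcases le_total m0 m1 with h | h
  · rw [min_eq_left h]
    calc ∑ a ∈ Finset.range (m0 + 1), ∑ b ∈ Finset.range (m1 + 1), (m0 + m1).choose (a + b)
        ≤ ∑ _a ∈ Finset.range (m0 + 1), 2 ^ (m0 + m1) := by
          apply Finset.sum_le_sum
          intro a ha
          simp only [Finset.mem_range] at ha
          exact sum_shift_le _ _ _ (by omega)
      _ = (m0 + 1) * 2 ^ (m0 + m1) := by
          rw [Finset.sum_const, Finset.card_range, smul_eq_mul]
  · rw [min_eq_right h, Finset.sum_comm]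
    calc ∑ b ∈ Finset.range (m1 + 1), ∑ a ∈ Finset.range (m0 + 1), (m0 + m1).choose (a + b)
        ≤ ∑ _b ∈ Finset.range (m1 + 1), 2 ^ (m0 + m1) := by
          apply Finset.sum_le_sum
          intro b hb
          simp only [Finset.mem_range] at hb
          have : ∑ a ∈ Finset.range (m0 + 1), (m0 + m1).choose (a + b)
              = ∑ a ∈ Finset.range (m0 + 1), (m0 + m1).choose (b + a) :=
            Finset.sum_congr rfl (fun a _ => by rw [Nat.add_comm a b])
          rw [this]
          exact sum_shift_le _ _ _ (by omega)
      _ = (m1 + 1) * 2 ^ (m0 + m1) := by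
          rw [Finset.sum_const, Finset.card_range, smul_eq_mul]

lemma antidiagonal_sum_eq (m : Fin 2 →₀ ℕ) (f : ℕ → ℕ → ℕ) :
    ∑ x ∈ Finset.HasAntidiagonal.antidiagonal m, f (x.1 0) (x.1 1)
      = ∑ a ∈ Finset.range (m 0 + 1), ∑ b ∈ Finset.range (m 1 + 1), f a b := by
  rw [← Finset.sum_product']
  refine Finset.sum_nbij' (fun x => (x.1 0, x.1 1))
    (fun p => (Finsupp.single 0 p.1 + Finsupp.single 1 p.2,
      m - (Finsupp.single 0 p.1 + Finsupp.single 1 p.2))) ?_ ?_ ?_ ?_ ?_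
  · intro x hx
    rw [Finset.HasAntidiagonal.mem_antidiagonal] at hx
    have h0 : x.1 0 + x.2 0 = m 0 := by
      rw [← Finsupp.add_apply, hx]
    have h1 : x.1 1 + x.2 1 = m 1 := by
      rw [← Finsupp.add_apply, hx]
    simp only [Finset.mem_product, Finset.mem_range]
    omega
  · intro p hp
    simp only [Finset.mem_product, Finset.mem_range] at hp
    rw [Finset.HasAntidiagonal.mem_antidiagonal]
    apply add_tsub_cancel_of_le
    intro i
    fin_cases i <;> simp [Finsupp.single_apply] <;> omega
  · intro x hx
    rw [Finset.HasAntidiagonal.mem_antidiagonal] at hx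
    have h1 : Finsupp.single 0 (x.1 0) + Finsupp.single 1 (x.1 1) = x.1 := by
      ext i
      fin_cases i <;> simp [Finsupp.single_apply]
    dsimp only
    refine Prod.ext h1 ?_
    rw [h1, ← hx, add_tsub_cancel_left]
  · intro p hp
    simp [Finsupp.single_apply]
  · intro x hx
    rfl

lemma choose_sum_le (m : Fin 2 →₀ ℕ) {d : ℕ} (hd : 1 ≤ d) (hn : m 0 + m 1 ≤ 2 * d) :
    ∑ x ∈ Finset.HasAntidiagonal.antidiagonal m, (m 0 + m 1).choose (x.1 0 + x.1 1) ≤ 2 ^ (3 * d) := by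
  set n := m 0 + m 1 with hndef
  have h1 : ∑ x ∈ Finset.HasAntidiagonal.antidiagonal m, n.choose (x.1 0 + x.1 1)
      ≤ (min (m 0) (m 1) + 1) * 2 ^ n := by
    rw [hndef, antidiagonal_sum_eq m (fun a b => (m 0 + m 1).choose (a + b))]
    exact nested_choose_le (m 0) (m 1)
  refine h1.trans ?_
  have hmin : 2 * (min (m 0) (m 1) + 1) ≤ n + 2 := by
    have := Nat.min_le_left (m 0) (m 1)
    have := Nat.min_le_right (m 0) (m 1)
    omega
  have key : 2 * ((min (m 0) (m 1) + 1) * 2 ^ n) ≤ 2 * 2 ^ (3 * d) := by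
    calc 2 * ((min (m 0) (m 1) + 1) * 2 ^ n) = (2 * (min (m 0) (m 1) + 1)) * 2 ^ n := by ring
      _ ≤ (n + 2) * 2 ^ n := Nat.mul_le_mul_right _ hmin
      _ ≤ (2 * d + 2) * 2 ^ (2 * d) :=
          Nat.mul_le_mul (by omega) (Nat.pow_le_pow_right (by norm_num) hn)
      _ = 2 * ((d + 1) * 2 ^ (2 * d)) := by ring
      _ ≤ 2 * (2 ^ d * 2 ^ (2 * d)) :=
          Nat.mul_le_mul_left _ (Nat.mul_le_mul_right _ (Nat.lt_two_pow_self (n := d)))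
      _ = 2 * 2 ^ (3 * d) := by rw [← pow_add]; ring_nf
  exact Nat.le_of_mul_le_mul_left key (by norm_num)

lemma inv_fact_eq (a b : ℕ) :
    (1 : ℝ) / (Nat.factorial a * Nat.factorial b)
      = ((a + b).choose a : ℝ) / Nat.factorial (a + b) := by
  have key : (a + b).choose a * Nat.factorial a * Nat.factorial b = Nat.factorial (a + b) := by
    have h := Nat.choose_mul_factorial_mul_factorial (Nat.le_add_right a b)
    rwa [Nat.add_sub_cancel_left] at h
  have h1 : (Nat.factorial a * Nat.factorial b : ℝ) ≠ 0 := by positivity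
  have h3 : (Nat.factorial (a + b) : ℝ) ≠ 0 := by positivity
  rw [div_eq_div_iff h1 h3, one_mul]
  calc (Nat.factorial (a + b) : ℝ) = (((a + b).choose a * a.factorial * b.factorial : ℕ) : ℝ) := by
        rw [key]
    _ = ((a + b).choose a : ℝ) * (Nat.factorial a * Nat.factorial b) := by push_cast; ring

lemma coeff_mul_bound {d : ℕ} {C₀ : ℝ} (hd : 1 ≤ d) (hC₀ : 0 < C₀)
    {q r : MvPolynomial (Fin 2) ℝ} (hq : IsBoundedPoly d C₀ q)
    (hr : IsBoundedPoly d C₀ r) (m : Fin 2 →₀ ℕ) :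
    |(q * r).coeff m| ≤ 2 ^ (3 * d) * C₀ ^ 2 / Nat.factorial (m 0 + m 1) := by
  set n := m 0 + m 1 with hndef
  by_cases hn : n ≤ 2 * d
  · rw [MvPolynomial.coeff_mul]
    have habs : |∑ x ∈ Finset.HasAntidiagonal.antidiagonal m, q.coeff x.1 * r.coeff x.2|
        ≤ ∑ x ∈ Finset.HasAntidiagonal.antidiagonal m, |q.coeff x.1 * r.coeff x.2| :=
      Finset.abs_sum_le_sum_abs _ _
    refine habs.trans ?_
    have hterm : ∀ x ∈ Finset.HasAntidiagonal.antidiagonal m,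
        |q.coeff x.1 * r.coeff x.2|
          ≤ C₀ ^ 2 / Nat.factorial n * (n.choose (x.1 0 + x.1 1) : ℝ) := by
      intro x hx
      rw [Finset.HasAntidiagonal.mem_antidiagonal] at hx
      have h0 : x.1 0 + x.2 0 = m 0 := by rw [← Finsupp.add_apply, hx]
      have h1 : x.1 1 + x.2 1 = m 1 := by rw [← Finsupp.add_apply, hx]
      have hab : (x.1 0 + x.1 1) + (x.2 0 + x.2 1) = n := by omega
      rw [abs_mul]
      have b1 := hq.2 x.1
      have b2 := hr.2 x.2
      calc |q.coeff x.1| * |r.coeff x.2|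
          ≤ (C₀ / Nat.factorial (x.1 0 + x.1 1)) * (C₀ / Nat.factorial (x.2 0 + x.2 1)) :=
            mul_le_mul b1 b2 (abs_nonneg _) (by positivity)
        _ = C₀ ^ 2 * (1 / (Nat.factorial (x.1 0 + x.1 1) * Nat.factorial (x.2 0 + x.2 1))) := by
            ring
        _ = C₀ ^ 2 / Nat.factorial n * (n.choose (x.1 0 + x.1 1) : ℝ) := by
            rw [inv_fact_eq, hab]; ring
    refine (Finset.sum_le_sum hterm).trans ?_
    rw [← Finset.mul_sum]
    have hsum : (∑ x ∈ Finset.HasAntidiagonal.antidiagonal m, (n.choose (x.1 0 + x.1 1) : ℝ))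
        ≤ (2 : ℝ) ^ (3 * d) := by
      have := choose_sum_le m hd hn
      calc (∑ x ∈ Finset.HasAntidiagonal.antidiagonal m, (n.choose (x.1 0 + x.1 1) : ℝ))
          = ((∑ x ∈ Finset.HasAntidiagonal.antidiagonal m, n.choose (x.1 0 + x.1 1) : ℕ) : ℝ) := by
            push_cast; rfl
        _ ≤ ((2 ^ (3 * d) : ℕ) : ℝ) := by
            exact_mod_cast this.trans (le_refl _)
        _ = (2 : ℝ) ^ (3 * d) := by push_cast; ring
    calc C₀ ^ 2 / Nat.factorial n * ∑ x ∈ Finset.HasAntidiagonal.antidiagonal m, (n.choose (x.1 0 + x.1 1) : ℝ)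
        ≤ C₀ ^ 2 / Nat.factorial n * (2 : ℝ) ^ (3 * d) :=
          mul_le_mul_of_nonneg_left hsum (by positivity)
      _ = 2 ^ (3 * d) * C₀ ^ 2 / Nat.factorial n := by ring
  · have hzero : (q * r).coeff m = 0 := by
      rw [MvPolynomial.coeff_mul]
      apply Finset.sum_eq_zero
      intro x hx
      rw [Finset.HasAntidiagonal.mem_antidiagonal] at hx
      have h0 : x.1 0 + x.2 0 = m 0 := by rw [← Finsupp.add_apply, hx]
      have h1 : x.1 1 + x.2 1 = m 1 := by rw [← Finsupp.add_apply, hx]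
      rcases Nat.lt_or_ge d (x.1 0 + x.1 1) with hgt | hle
      · have : q.coeff x.1 = 0 := by
          apply MvPolynomial.coeff_eq_zero_of_totalDegree_lt
          rw [support_sum_fin2]
          exact lt_of_le_of_lt hq.1 hgt
        rw [this, zero_mul]
      · have hgt2 : d < x.2 0 + x.2 1 := by omega
        have : r.coeff x.2 = 0 := by
          apply MvPolynomial.coeff_eq_zero_of_totalDegree_lt
          rw [support_sum_fin2]
          exact lt_of_le_of_lt hr.1 hgt2
        rw [this, mul_zero]
    rw [hzero, abs_zero]
    positivity

lemma half_sq (u v : MvPolynomial (Fin 2) ℝ) :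
    (MvPolynomial.C (1/2 : ℝ) * (u + v)) ^ 2 + (MvPolynomial.C (1/2 : ℝ) * (u - v)) ^ 2
      = MvPolynomial.C (1/2 : ℝ) * (u ^ 2 + v ^ 2) := by
  have h : (MvPolynomial.C (1/2 : ℝ) : MvPolynomial (Fin 2) ℝ) ^ 2 * 2
      = MvPolynomial.C (1/2 : ℝ) := by
    rw [← map_pow, ← map_ofNat (MvPolynomial.C : ℝ →+* MvPolynomial (Fin 2) ℝ) 2, ← map_mul]
    norm_num
  calc (MvPolynomial.C (1/2 : ℝ) * (u + v)) ^ 2 + (MvPolynomial.C (1/2 : ℝ) * (u - v)) ^ 2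
      = (MvPolynomial.C (1/2 : ℝ)) ^ 2 * 2 * (u ^ 2 + v ^ 2) := by ring
    _ = MvPolynomial.C (1/2 : ℝ) * (u ^ 2 + v ^ 2) := by rw [h]

lemma half_bounded {d : ℕ} {C₀ : ℝ} (hd : 1 ≤ d) (hC₀ : 0 < C₀)
    {u v u' v' : MvPolynomial (Fin 2) ℝ} (hu : IsBoundedPoly d C₀ u)
    (hv : IsBoundedPoly d C₀ v) (hu' : IsBoundedPoly d C₀ u')
    (hv' : IsBoundedPoly d C₀ v') :
    IsBoundedPoly (2 * d) (2 ^ (3 * d) * C₀ ^ 2)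
      (MvPolynomial.C (1/2 : ℝ) * (u * v + u' * v')) := by
  constructor
  · calc (MvPolynomial.C (1/2 : ℝ) * (u * v + u' * v')).totalDegree
        ≤ (MvPolynomial.C (1/2 : ℝ) : MvPolynomial (Fin 2) ℝ).totalDegree
          + (u * v + u' * v').totalDegree := totalDegree_mul _ _
      _ = (u * v + u' * v').totalDegree := by rw [totalDegree_C, zero_add]
      _ ≤ max (u * v).totalDegree (u' * v').totalDegree := totalDegree_add _ _
      _ ≤ 2 * d := by
          apply max_le
          · exact (totalDegree_mul _ _).trans (by have := hu.1; have := hv.1; omega)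
          · exact (totalDegree_mul _ _).trans (by have := hu'.1; have := hv'.1; omega)
  · intro m
    rw [coeff_C_mul, coeff_add]
    have b1 := coeff_mul_bound hd hC₀ hu hv m
    have b2 := coeff_mul_bound hd hC₀ hu' hv' m
    calc |1/2 * ((u * v).coeff m + (u' * v').coeff m)|
        = 1/2 * |(u * v).coeff m + (u' * v').coeff m| := by
          rw [abs_mul]; norm_num
      _ ≤ 1/2 * (|(u * v).coeff m| + |(u' * v').coeff m|) := by
          have := abs_add_le ((u * v).coeff m) ((u' * v').coeff m)
          linarith
      _ ≤ 2 ^ (3 * d) * C₀ ^ 2 / Nat.factorial (m 0 + m 1) := by linarith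

lemma half_bounded_sub {d : ℕ} {C₀ : ℝ} (hd : 1 ≤ d) (hC₀ : 0 < C₀)
    {u v u' v' : MvPolynomial (Fin 2) ℝ} (hu : IsBoundedPoly d C₀ u)
    (hv : IsBoundedPoly d C₀ v) (hu' : IsBoundedPoly d C₀ u')
    (hv' : IsBoundedPoly d C₀ v') :
    IsBoundedPoly (2 * d) (2 ^ (3 * d) * C₀ ^ 2)
      (MvPolynomial.C (1/2 : ℝ) * (u * v - u' * v')) := by
  have := half_bounded hd hC₀ hu hv hu' (neg_bounded hv')
  simpa [mul_neg, sub_eq_add_neg] using this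

lemma sos_half_sum (k d : ℕ) (C₀ : ℝ) (hk : 1 ≤ k) (hd : 1 ≤ d) (hC₀ : 0 < C₀)
    (P Q P' Q' E : MvPolynomial (Fin 2) ℝ)
    (hP : IsBoundedSoS k d C₀ P) (hQ : IsBoundedSoS k d C₀ Q)
    (hP' : IsBoundedSoS k d C₀ P') (hQ' : IsBoundedSoS k d C₀ Q')
    (hE : P * Q + P' * Q' = 2 * E) :
    IsBoundedSoS (2 * k ^ 2) (2 * d) (2 ^ (3 * d) * C₀ ^ 2) E := by
  obtain ⟨q, hqsum, hqb⟩ := hP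
  obtain ⟨r, hrsum, hrb⟩ := hQ
  obtain ⟨s, hssum, hsb⟩ := hP'
  obtain ⟨t, htsum, htb⟩ := hQ'
  set w : Fin 2 × Fin k × Fin k → MvPolynomial (Fin 2) ℝ := fun p =>
    if p.1 = 0 then MvPolynomial.C (1/2 : ℝ) * (q p.2.1 * r p.2.2 + s p.2.1 * t p.2.2)
    else MvPolynomial.C (1/2 : ℝ) * (q p.2.1 * r p.2.2 - s p.2.1 * t p.2.2) with hw
  have e : (Fin 2 × Fin k × Fin k) ≃ Fin (2 * k ^ 2) :=
    (Equiv.prodCongrRight fun _ => finProdFinEquiv).trans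
      (finProdFinEquiv.trans (finCongr (by ring)))
  refine ⟨fun i => w (e.symm i), ?_, ?_⟩
  · have hsum : ∑ i : Fin (2 * k ^ 2), (w (e.symm i)) ^ 2
        = ∑ p : Fin 2 × Fin k × Fin k, (w p) ^ 2 :=
      (Fintype.sum_equiv e (fun p => (w p) ^ 2) (fun i => (w (e.symm i)) ^ 2)
        (fun p => by simp)).symm
    rw [hsum, Fintype.sum_prod_type, Fin.sum_univ_two]
    have hpair : ∀ ij : Fin k × Fin k,
        (w (0, ij)) ^ 2 + (w (1, ij)) ^ 2
          = MvPolynomial.C (1/2 : ℝ) * ((q ij.1) ^ 2 * (r ij.2) ^ 2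
              + (s ij.1) ^ 2 * (t ij.2) ^ 2) := by
      intro ij
      simp only [hw]
      norm_num
      rw [half_sq]
      congr 1
      ring
    rw [← Finset.sum_add_distrib]
    rw [Finset.sum_congr rfl (fun ij _ => hpair ij)]
    rw [← Finset.mul_sum]
    have hfac : ∑ ij : Fin k × Fin k,
        ((q ij.1) ^ 2 * (r ij.2) ^ 2 + (s ij.1) ^ 2 * (t ij.2) ^ 2)
          = P * Q + P' * Q' := by
      rw [Finset.sum_add_distrib, hqsum, hrsum, hssum, htsum]
      rw [Finset.sum_mul_sum, Finset.sum_mul_sum]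
      simp [Fintype.sum_prod_type]
    rw [hfac, hE]
    have h2 : (MvPolynomial.C (1/2 : ℝ) : MvPolynomial (Fin 2) ℝ) * 2 = 1 := by
      rw [← map_ofNat (MvPolynomial.C : ℝ →+* MvPolynomial (Fin 2) ℝ) 2, ← map_mul]
      norm_num
    calc E = (MvPolynomial.C (1/2 : ℝ) * 2) * E := by rw [h2, one_mul]
      _ = MvPolynomial.C (1/2 : ℝ) * (2 * E) := by ring
  · intro i
    dsimp only
    rcases hbij : e.symm i with ⟨b, ij⟩
    fin_cases b
    · simpa [hw] using half_bounded hd hC₀ (hqb ij.1) (hrb ij.2) (hsb ij.1) (htb ij.2)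
    · simpa [hw] using half_bounded_sub hd hC₀ (hqb ij.1) (hrb ij.2) (hsb ij.1) (htb ij.2)

/-- If A+B, A−B, C+D, C−D are (k,d,C₀)-bounded SoS polynomials, then
A·C + B·D and A·C − B·D are (2k², 2d, 2^{3d}·C₀²)-bounded SoS polynomials. -/
theorem bounded_sos_product (k d : ℕ) (C₀ : ℝ) (hk : 1 ≤ k) (hd : 1 ≤ d)
    (hC₀ : 0 < C₀) (A B C D : MvPolynomial (Fin 2) ℝ)
    (hAB₁ : IsBoundedSoS k d C₀ (A + B)) (hAB₂ : IsBoundedSoS k d C₀ (A - B))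
    (hCD₁ : IsBoundedSoS k d C₀ (C + D)) (hCD₂ : IsBoundedSoS k d C₀ (C - D)) :
    IsBoundedSoS (2 * k ^ 2) (2 * d) (2 ^ (3 * d) * C₀ ^ 2) (A * C + B * D) ∧
    IsBoundedSoS (2 * k ^ 2) (2 * d) (2 ^ (3 * d) * C₀ ^ 2) (A * C - B * D) := by
  constructor
  · exact sos_half_sum k d C₀ hk hd hC₀ (A + B) (C + D) (A - B) (C - D) _
      hAB₁ hCD₁ hAB₂ hCD₂ (by ring)
  · exact sos_half_sum k d C₀ hk hd hC₀ (A + B) (C - D) (A - B) (C + D) _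
      hAB₁ hCD₂ hAB₂ hCD₁ (by ring)
end
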